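/- arXiv:1711.08215 — 4 statements merged into one kernel-verified Lean document; each statement's English description precedes it below -/
import Mathlib

section
/- For every positive integer e, the multiplicative order of 2 modulo 7^e equals φ(7^e)/2 = 3·7^(e-1), and in particular this order is odd. -/
lemma val_eight_pow_sub_one (n : ℕ) (hn : n ≠ 0) :
    padicValNat 7 (8 ^ n - 1) = 1 + padicValNat 7 n := by
  haveI : Fact (Nat.Prime 7) := ⟨by norm_num⟩
  have h := padicValNat.pow_sub_pow (p := 7) (x := 8) (y := 1)
    (by decide) (by norm_num) (by norm_num) (by norm_num) hn
  simpa using h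

lemma two_pow_eq_one_iff (e N : ℕ) :
    (2 : ZMod (7 ^ e)) ^ N = 1 ↔ 7 ^ e ∣ 2 ^ N - 1 := by
  have h := ZMod.natCast_eq_natCast_iff (2 ^ N) 1 (7 ^ e)
  push_cast at h
  rw [h, Nat.ModEq.comm, Nat.modEq_iff_dvd' (Nat.one_le_two_pow)]

lemma two_pow_three_zmod7 : ((2 : ZMod 7) ^ 3) = 1 := by decide

lemma two_ne_one_zmod7 : (2 : ZMod 7) ≠ 1 := by decide

theorem order_of_two_mod_seven_pow (e : ℕ) (he : 0 < e) :
    orderOf (2 : ZMod (7 ^ e)) = Nat.totient (7 ^ e) / 2 ∧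
    orderOf (2 : ZMod (7 ^ e)) = 3 * 7 ^ (e - 1) ∧
    Odd (orderOf (2 : ZMod (7 ^ e))) := by
  haveI : Fact (Nat.Prime 7) := ⟨by norm_num⟩
  have hord : orderOf (2 : ZMod (7 ^ e)) = 3 * 7 ^ (e - 1) := by
    apply orderOf_eq_of_pow_and_pow_div_prime (by positivity)
    · rw [two_pow_eq_one_iff]
      have h2 : (2:ℕ) ^ (3 * 7 ^ (e - 1)) = 8 ^ 7 ^ (e - 1) := by
        rw [pow_mul]; norm_num
      rw [h2]
      have hv := val_eight_pow_sub_one (7 ^ (e - 1)) (by positivity)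
      rw [padicValNat.prime_pow] at hv
      calc (7:ℕ) ^ e ∣ 7 ^ padicValNat 7 ((8:ℕ) ^ 7 ^ (e - 1) - 1) := by
            apply pow_dvd_pow; omega
        _ ∣ _ := pow_padicValNat_dvd
    · intro p hp hpd
      have hp37 : p = 3 ∨ p = 7 := by
        rcases (Nat.Prime.dvd_mul hp).mp hpd with h | h
        · exact Or.inl ((Nat.prime_dvd_prime_iff_eq hp (by norm_num)).mp h)
        · exact Or.inr
            ((Nat.prime_dvd_prime_iff_eq hp (by norm_num)).mp (hp.dvd_of_dvd_pow h))
      rcases hp37 with rfl | rfl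
      · have hq : 3 * 7 ^ (e - 1) / 3 = 7 ^ (e - 1) := by omega
        rw [hq]
        intro h1
        have h7 : (2 : ZMod 7) ^ 7 ^ (e - 1) = 1 := by
          have h2 := congrArg (ZMod.castHom (dvd_pow_self 7 he.ne') (ZMod 7)) h1
          rw [map_pow, map_one, map_ofNat] at h2
          exact h2
        obtain ⟨k, hk⟩ : ∃ k, 7 ^ (e - 1) = 3 * k + 1 := by
          refine ⟨(7 ^ (e - 1) - 1) / 3, ?_⟩
          have hm : 7 ^ (e - 1) % 3 = 1 := by rw [Nat.pow_mod]; simp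
          have hp1 : 0 < 7 ^ (e - 1) := by positivity
          omega
        rw [hk, pow_add, pow_mul, two_pow_three_zmod7, one_pow, one_mul,
          pow_one] at h7
        exact absurd h7 two_ne_one_zmod7
      · have he2 : 2 ≤ e := by
          rcases Nat.lt_or_ge e 2 with h | h
          · exfalso
            have he1 : e = 1 := by omega
            subst he1
            norm_num at hpd
          · exact h
        have hq : 3 * 7 ^ (e - 1) / 7 = 3 * 7 ^ (e - 2) := by
          have h77 : 7 ^ (e - 1) = 7 * 7 ^ (e - 2) := by
            rw [← pow_succ']; congr 1; omega
          rw [h77]; omega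
        rw [hq, Ne, two_pow_eq_one_iff]
        intro hdvd
        have h2 : (2:ℕ) ^ (3 * 7 ^ (e - 2)) = 8 ^ 7 ^ (e - 2) := by
          rw [pow_mul]; norm_num
        rw [h2] at hdvd
        have hne : (8:ℕ) ^ 7 ^ (e - 2) - 1 ≠ 0 := by
          have h1 : (1:ℕ) < 8 ^ 7 ^ (e - 2) :=
            Nat.one_lt_pow (by positivity) (by norm_num)
          omega
        have hle := (padicValNat_dvd_iff_le hne).mp hdvd
        have hv := val_eight_pow_sub_one (7 ^ (e - 2)) (by positivity)
        rw [padicValNat.prime_pow] at hv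
        omega
  refine ⟨?_, hord, ?_⟩
  · rw [hord, Nat.totient_prime_pow (by norm_num) he]
    omega
  · rw [hord]
    exact Odd.mul (by decide) (Odd.pow (by decide))
end

section
/- The complex number (-1 + √-7)/(2√2) has absolute value 1 but is not a root of unity. -/
/-!
A root of unity `z` is an algebraic integer, and so is its conjugate `z̄`, hence so is
`z + z̄ = 2 Re z`. For `z = (-1 + √-7)/(2√2)` this gives `(2 Re z)² = 1/2`, a rational number
that is not an integer, so `z` is not a root of unity.
-/

open Real ComplexConjugate

theorem Complex.isIntegral_two_mul_re_of_pow_eq_one {z : ℂ} {n : ℕ} (hn : 0 < n)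
    (hz : z ^ n = 1) : IsIntegral ℤ ((2 * z.re : ℝ) : ℂ) := by
  have hz' : conj z ^ n = 1 := by rw [← map_pow, hz, map_one]
  rw [← Complex.add_conj]
  exact (IsIntegral.of_pow hn (hz ▸ isIntegral_one)).add
    (IsIntegral.of_pow hn (hz' ▸ isIntegral_one))

theorem Complex.not_isIntegral_half : ¬IsIntegral ℤ (1 / 2 : ℂ) := by
  intro h
  obtain ⟨k, hk⟩ := h.exists_int_iff_exists_rat.mp ⟨1 / 2, by push_cast; rfl⟩
  have h2k : (2 * k : ℂ) = 1 := by rw [← hk]; norm_num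
  have : 2 * k = 1 := by exact_mod_cast h2k
  omega

theorem not_root_of_unity :
    ‖(-1 + Complex.I * Real.sqrt 7) / (2 * Real.sqrt 2)‖ = 1 ∧
    ∀ n : ℕ, 0 < n →
      ((-1 + Complex.I * Real.sqrt 7) / (2 * Real.sqrt 2)) ^ n ≠ 1 := by
  have hreim : ((-1 + Complex.I * √7) / (2 * √2)).re = -1 / (2 * √2) ∧
      ((-1 + Complex.I * √7) / (2 * √2)).im = √7 / (2 * √2) := by
    have h : ((2 * √2 : ℝ) : ℂ) = 2 * √2 := by push_cast; rfl
    rw [← h, Complex.div_ofReal_re, Complex.div_ofReal_im]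
    simp
  set z : ℂ := (-1 + Complex.I * √7) / (2 * √2)
  obtain ⟨hre, him⟩ := hreim
  have h2 : √2 ^ 2 = 2 := sq_sqrt zero_le_two
  have h7 : √7 ^ 2 = 7 := sq_sqrt (by norm_num)
  refine ⟨?_, fun n hn hzn => Complex.not_isIntegral_half ?_⟩
  · rw [Complex.norm_def, Complex.normSq_apply, hre, him, ← sq, ← sq, div_pow, div_pow, mul_pow,
      h2, h7]
    norm_num
  · have hsq : (2 * z.re) ^ 2 = 1 / 2 := by
      rw [hre, mul_pow, div_pow, mul_pow, h2]
      norm_num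
    have h := (Complex.isIntegral_two_mul_re_of_pow_eq_one hn hzn).pow 2
    rwa [← Complex.ofReal_pow, hsq, Complex.ofReal_div, Complex.ofReal_one,
      Complex.ofReal_ofNat] at h
end

section
/- With μ_n defined as the minimum over all functions f : F_2^n → {−1,1} of the maximum over a ∈ F_2^n of |f̂(a)|, where f̂(a) = 2^(−n/2) Σ_{y ∈ F_2^n} f(y)(−1)^(a·y), one has μ_{n+2} ≤ μ_n for every n ≥ 1. -/
open Finset

noncomputable def fhat (n : ℕ) (f : (Fin n → ZMod 2) → ℝ) (a : Fin n → ZMod 2) : ℝ :=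
  (2 : ℝ) ^ (-(n : ℝ) / 2) *
    ∑ y : Fin n → ZMod 2, f y * (-1 : ℝ) ^ (∑ i, a i * y i : ZMod 2).val

noncomputable def mu (n : ℕ) : ℝ :=
  sInf {M : ℝ | ∃ f : (Fin n → ZMod 2) → ℝ, (∀ y, f y = 1 ∨ f y = -1) ∧
    M = Finset.univ.sup' Finset.univ_nonempty (fun a => |fhat n f a|)}

/-!
Tensoring with the function `(u, v) ↦ (-1) ^ (u v)` on `𝔽₂²`, whose Walsh–Hadamard coefficients all
have absolute value `1` (it is bent), turns a `±1`-valued function on `𝔽₂ⁿ` into one on `𝔽₂ⁿ⁺²`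
with the same largest coefficient, because the normalized transform is multiplicative on tensor
products.
-/

lemma mul_eq_one_or_neg_one {R : Type*} [Monoid R] [HasDistribNeg R] {x y : R}
    (hx : x = 1 ∨ x = -1) (hy : y = 1 ∨ y = -1) : x * y = 1 ∨ x * y = -1 := by
  rcases hx with rfl | rfl <;> rcases hy with rfl | rfl <;> simp

lemma neg_one_pow_val_add (x y : ZMod 2) :
    (-1 : ℝ) ^ (x + y).val = (-1) ^ x.val * (-1) ^ y.val := by
  rw [← pow_add, ZMod.val_add, ← neg_one_pow_eq_pow_mod_two]

lemma fhat_append {n m : ℕ} (f : (Fin n → ZMod 2) → ℝ) (g : (Fin m → ZMod 2) → ℝ)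
    (a : Fin (n + m) → ZMod 2) :
    fhat (n + m) (fun z => f (fun i => z (Fin.castAdd m i)) * g (fun j => z (Fin.natAdd n j))) a
      = fhat n f (fun i => a (Fin.castAdd m i)) * fhat m g (fun j => a (Fin.natAdd n j)) := by
  have hscale : (2 : ℝ) ^ (-((n + m : ℕ) : ℝ) / 2) = 2 ^ (-(n : ℝ) / 2) * 2 ^ (-(m : ℝ) / 2) := by
    rw [← Real.rpow_add two_pos]; congr 1; push_cast; ring
  simp only [fhat, hscale, ← (Fin.appendEquiv n m).sum_comp, Fintype.sum_prod_type,
    Fin.sum_univ_add, Fin.appendEquiv, Equiv.coe_fn_mk, Fin.append_left, Fin.append_right,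
    neg_one_pow_val_add]
  rw [mul_mul_mul_comm, Fintype.sum_mul_sum]
  congr 1
  exact sum_congr rfl fun x _ => sum_congr rfl fun y _ => by ring

lemma fhat_two_neg_one_pow_mul (b : Fin 2 → ZMod 2) :
    fhat 2 (fun z => (-1 : ℝ) ^ (z 0 * z 1).val) b = (-1) ^ (b 0 * b 1).val := by
  have hscale : (2 : ℝ) ^ (-((2 : ℕ) : ℝ) / 2) = 1 / 2 := by
    rw [show (-((2 : ℕ) : ℝ) / 2) = -1 by norm_num, Real.rpow_neg_one]; norm_num
  have huniv : (univ : Finset (ZMod 2)) = {0, 1} := rfl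
  rw [fhat, hscale, ← (piFinTwoEquiv _).symm.sum_comp, Fintype.sum_prod_type]
  simp only [Fin.sum_univ_two, huniv]
  generalize b 0 = s, b 1 = t
  have hcases : ∀ x : ZMod 2, x = 0 ∨ x = 1 := by decide
  have hval : ∀ x : ZMod 2, (-1 : ℝ) ^ x.val = if x = 0 then 1 else -1 := by
    intro x; rcases hcases x with rfl | rfl <;> simp [ZMod.val_one]
  rcases hcases s with rfl | rfl <;> rcases hcases t with rfl | rfl <;>
    simp [hval, show (1 + 1 : ZMod 2) = 0 from rfl] <;> norm_num

lemma sup'_abs_fhat_append_eq {n m : ℕ} (f : (Fin n → ZMod 2) → ℝ) (g : (Fin m → ZMod 2) → ℝ)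
    (hg : ∀ b, |fhat m g b| = 1) :
    univ.sup' univ_nonempty (fun a => |fhat (n + m)
        (fun z => f (fun i => z (Fin.castAdd m i)) * g (fun j => z (Fin.natAdd n j))) a|)
      = univ.sup' univ_nonempty (fun a => |fhat n f a|) := by
  have hrestrict : Function.Surjective fun (a : Fin (n + m) → ZMod 2) i => a (Fin.castAdd m i) :=
    fun b => ⟨Fin.append b 0, funext fun i => Fin.append_left b 0 i⟩
  simp only [fhat_append, abs_mul, hg, mul_one]
  refine le_antisymm (sup'_le _ _ fun a _ => ?_) (sup'_le _ _ fun b _ => ?_)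
  · exact le_sup' (fun b => |fhat n f b|) (mem_univ fun i => a (Fin.castAdd m i))
  · obtain ⟨a, rfl⟩ := hrestrict b
    exact le_sup' (fun x : Fin (n + m) → ZMod 2 => |fhat n f fun i => x (Fin.castAdd m i)|)
      (mem_univ a)

lemma mu_le_sup'_abs_fhat {n : ℕ} (f : (Fin n → ZMod 2) → ℝ) (hf : ∀ y, f y = 1 ∨ f y = -1) :
    mu n ≤ univ.sup' univ_nonempty (fun a => |fhat n f a|) := by
  refine csInf_le ⟨0, ?_⟩ ⟨f, hf, rfl⟩
  rintro _ ⟨g, -, rfl⟩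
  exact (abs_nonneg _).trans (le_sup' (fun a => |fhat n g a|) (mem_univ 0))

theorem mu_succ_succ_le_general (n : ℕ) : mu (n + 2) ≤ mu n := by
  refine le_csInf ⟨_, fun _ => 1, fun _ => Or.inl rfl, rfl⟩ ?_
  rintro _ ⟨f, hf, rfl⟩
  set bent : (Fin 2 → ZMod 2) → ℝ := fun w => (-1) ^ (w 0 * w 1).val
  have hbent : ∀ b, |fhat 2 bent b| = 1 := fun b => by
    rw [fhat_two_neg_one_pow_mul, abs_neg_one_pow]
  have hsign : ∀ z : Fin (n + 2) → ZMod 2,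
      f (fun i => z (Fin.castAdd 2 i)) * bent (fun j => z (Fin.natAdd n j)) = 1 ∨
      f (fun i => z (Fin.castAdd 2 i)) * bent (fun j => z (Fin.natAdd n j)) = -1 := fun z =>
    mul_eq_one_or_neg_one (hf _) (neg_one_pow_eq_or ℝ _)
  calc mu (n + 2) ≤ _ := mu_le_sup'_abs_fhat _ hsign
    _ = _ := sup'_abs_fhat_append_eq f bent hbent

theorem mu_succ_succ_le (n : ℕ) (hn : 1 ≤ n) : mu (n + 2) ≤ mu n :=
  mu_succ_succ_le_general n
end

section
/- Let F_q be a finite field with nontrivial additive character ψ, let v divide q−1, let H ≤ F_q^* have index v with coset representatives T, and let g : T → {0,−1,1} be balanced (equal numbers of values −1 and 1) with g(z) = 0 iff z ∈ H. Define f_2(y) = Σ_{z∈T} 1_H(y/z) g(z) for y ≠ 0 and f_2(0)=0, and f̂_2(a) = q^(−1/2) Σ_y f_2(y) ψ(ay). If ε > 0 is such that |G(χ)/√q − 1| ≤ ε for every nontrivial multiplicative character χ of order dividing v, then max_{a ∈ F_q} |f̂_2(a)| ≤ 1 + εv. -/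
open scoped Classical

/-!
Let `χ` be a character of order `v` whose kernel is the group `H` of `v`-th powers. Orthogonality
in the cyclic group generated by `χ` expands `f₂ = v⁻¹ ∑ⱼ cⱼ χʲ` with
`cⱼ = ∑_{z ∈ T} g z χʲ(z⁻¹)`, and `c₀ = 0` because `g` is balanced. At `a ≠ 0` the Fourier
transform of `χʲ` is `χʲ(a⁻¹) G(χʲ)`, so replacing every `G(χʲ)/√q` by `1` turns `f̂₂(a)` back
into `f₂(a⁻¹) = g(b)`, at a cost of at most `v⁻¹ · v · |T| ε ≤ ε v` because `|T| ≤ v`.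
At `a = 0` every term vanishes.
-/

open Finset

lemma geom_sum_eq_ite_of_pow_eq_one {K : Type*} [Field K] {w : K} {n : ℕ} (hw : w ^ n = 1) :
    ∑ j ∈ range n, w ^ j = if w = 1 then (n : K) else 0 := by
  split_ifs with h
  · simp [h]
  · rw [geom_sum_eq h, hw, sub_self, zero_div]

namespace MulChar

variable {F : Type*} [Field F]

lemma sum_range_pow_apply {K : Type*} [Field K] {χ : MulChar F K} {n : ℕ} (hχ : χ ^ n = 1)
    {u : F} (hu : u ≠ 0) :
    ∑ j ∈ range n, (χ ^ j) u = if χ u = 1 then (n : K) else 0 := by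
  lift u to Fˣ using hu.isUnit
  have hpow : χ u ^ n = 1 := by rw [← pow_apply_coe, hχ, one_apply_coe]
  simp only [pow_apply_coe, geom_sum_eq_ite_of_pow_eq_one hpow]

lemma pow_eq_one_of_apply_eq_one_iff {K : Type*} [Field K] {χ : MulChar F K} {v : ℕ}
    (hker : ∀ u : F, u ≠ 0 → (χ u = 1 ↔ ∃ x : F, x ≠ 0 ∧ x ^ v = u)) : χ ^ v = 1 := by
  ext u
  rw [pow_apply_coe, one_apply_coe, ← map_pow]
  exact (hker _ (pow_ne_zero v u.ne_zero)).mpr ⟨u, u.ne_zero, rfl⟩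

variable [Fintype F]

lemma norm_apply_le_one (χ : MulChar F ℂ) (a : F) : ‖χ a‖ ≤ 1 := by
  rcases eq_or_ne a 0 with rfl | ha
  · simp
  · have hpow : χ a ^ orderOf χ = 1 := by
      rw [← χ.pow_apply' χ.orderOf_pos.ne', pow_orderOf_eq_one, one_apply ha.isUnit]
    exact (Complex.norm_eq_one_of_pow_eq_one hpow χ.orderOf_pos.ne').le

lemma sum_apply_mul_addChar {K : Type*} [Field K] (χ : MulChar F K) (ψ : AddChar F K) {a : F}
    (ha : a ≠ 0) : ∑ y, χ y * ψ (a * y) = χ a⁻¹ * gaussSum χ ψ := by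
  rw [← gaussSum_mulShift χ ψ (Units.mk0 a ha), ← mul_assoc, ← map_mul, Units.val_mk0,
    inv_mul_cancel₀ ha, map_one, one_mul]
  rfl

/-- Send a generator of the cyclic group `Fˣ` to a primitive `v`-th root of unity. -/
lemma exists_orderOf_eq_and_apply_eq_one_iff {v : ℕ} (hv0 : 0 < v)
    (hv : v ∣ Fintype.card F - 1) :
    ∃ χ : MulChar F ℂ, orderOf χ = v ∧
      ∀ u : F, u ≠ 0 → (χ u = 1 ↔ ∃ x : F, x ≠ 0 ∧ x ^ v = u) := by
  obtain ⟨γ, hγ⟩ := IsCyclic.exists_generator (α := Fˣ)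
  have hζ := Complex.isPrimitiveRoot_exp v hv0.ne'
  set ζ : ℂˣ := (hζ.isUnit hv0.ne').unit
  have hζv : ∀ m : ℕ, (ζ : ℂ) ^ m = 1 ↔ v ∣ m := hζ.pow_eq_one_iff_dvd
  have hvγ : v ∣ orderOf γ := by
    rwa [orderOf_eq_card_of_forall_mem_zpowers hγ, Nat.card_eq_fintype_card, Fintype.card_units]
  have hζmem : ζ ∈ rootsOfUnity (Fintype.card Fˣ) ℂ := by
    rw [mem_rootsOfUnity, Units.ext_iff, Units.val_pow_eq_pow_val, Units.val_one, hζv,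
      ← Nat.card_eq_fintype_card, ← orderOf_eq_card_of_forall_mem_zpowers hγ]
    exact hvγ
  set χ := ofRootOfUnity hζmem hγ
  have hχγ : ∀ m : ℕ, χ ((γ : F) ^ m) = (ζ : ℂ) ^ m := fun m => by
    rw [map_pow, ofRootOfUnity_spec]
  have hpowers : ∀ u : F, u ≠ 0 → ∃ m : ℕ, (γ : F) ^ m = u := by
    intro u hu
    obtain ⟨m, hm⟩ := mem_powers_iff_mem_zpowers.mpr (hγ (Units.mk0 u hu))
    exact ⟨m, by rw [← Units.val_pow_eq_pow_val]; exact congrArg Units.val hm⟩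
  have hχpow : ∀ m : ℕ, orderOf χ ∣ m ↔ v ∣ m := by
    intro m
    rw [orderOf_dvd_iff_pow_eq_one, eq_iff hγ, pow_apply_coe, one_apply_coe, ← hζv m,
      ofRootOfUnity_spec]
  refine ⟨χ, Nat.dvd_antisymm ((hχpow v).mpr dvd_rfl) ((hχpow _).mp dvd_rfl), fun u hu => ?_⟩
  obtain ⟨m, rfl⟩ := hpowers u hu
  rw [hχγ, hζv]
  constructor
  · rintro ⟨k, rfl⟩
    exact ⟨(γ : F) ^ k, pow_ne_zero _ γ.ne_zero, by rw [← pow_mul, mul_comm]⟩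
  · rintro ⟨x, hx, hxv⟩
    obtain ⟨k, rfl⟩ := hpowers x hx
    rw [← pow_mul, ← Units.val_pow_eq_pow_val, ← Units.val_pow_eq_pow_val, Units.val_inj,
      pow_eq_pow_iff_modEq] at hxv
    exact (hxv.dvd_iff hvγ).mp (dvd_mul_left v k)

end MulChar

section CosetExtension

variable {F : Type*} [Field F]

noncomputable def cosetCoeff (χ : MulChar F ℂ) (T : Finset F) (g : F → ℝ) (j : ℕ) : ℂ :=
  ∑ z ∈ T, (g z : ℂ) * (χ ^ j) z⁻¹

variable {χ : MulChar F ℂ} {v : ℕ} {T : Finset F} {g : F → ℝ}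

lemma cosetCoeff_zero (hT0 : ∀ z ∈ T, z ≠ 0) (hgbal : ∑ z ∈ T, g z = 0) :
    cosetCoeff χ T g 0 = 0 := by
  calc cosetCoeff χ T g 0 = ((∑ z ∈ T, g z : ℝ) : ℂ) := by
        rw [Complex.ofReal_sum]
        refine sum_congr rfl fun z hz => ?_
        rw [pow_zero, MulChar.one_apply (inv_ne_zero (hT0 z hz)).isUnit, mul_one]
    _ = 0 := by rw [hgbal, Complex.ofReal_zero]

lemma card_le_of_existsUnique_mem (hv0 : v ≠ 0)
    (hker : ∀ u : F, u ≠ 0 → (χ u = 1 ↔ ∃ x : F, x ≠ 0 ∧ x ^ v = u))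
    (hT0 : ∀ z ∈ T, z ≠ 0)
    (hT : ∀ y : F, y ≠ 0 → ∃! z, z ∈ T ∧ ∃ x : F, x ≠ 0 ∧ x ^ v = y / z) :
    #T ≤ v := by
  have hinj : Set.InjOn χ T := by
    intro z₁ h₁ z₂ h₂ h
    have hz₁ := hT0 z₁ h₁
    have hz₂ := hT0 z₂ h₂
    have hquot : ∃ x : F, x ≠ 0 ∧ x ^ v = z₁ / z₂ := by
      rw [← hker _ (div_ne_zero hz₁ hz₂), div_eq_mul_inv, map_mul, h, ← map_mul,
        mul_inv_cancel₀ hz₂, map_one]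
    exact (hT z₁ hz₁).unique ⟨h₁, 1, one_ne_zero, by rw [one_pow, div_self hz₁]⟩ ⟨h₂, hquot⟩
  have hmaps : Set.MapsTo χ T (Polynomial.nthRootsFinset v (1 : ℂ)) := by
    intro z hz
    rw [mem_coe, Polynomial.mem_nthRootsFinset (Nat.pos_of_ne_zero hv0), ← χ.pow_apply' hv0,
      MulChar.pow_eq_one_of_apply_eq_one_iff hker, MulChar.one_apply (hT0 z hz).isUnit]
  calc #T ≤ #(Polynomial.nthRootsFinset v (1 : ℂ)) := card_le_card_of_injOn χ hmaps hinj
    _ = v := (Complex.isPrimitiveRoot_exp v hv0).card_nthRootsFinset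

variable [Fintype F]

/-- The paper's `f₂`. -/
noncomputable def cosetExtension (T : Finset F) (v : ℕ) (g : F → ℝ) (y : F) : ℂ :=
  if y = 0 then 0 else
    ∑ z ∈ T, (if ∃ x : F, x ≠ 0 ∧ x ^ v = y / z then (1 : ℂ) else 0) * (g z : ℂ)

lemma cosetExtension_eq_sum (hv0 : v ≠ 0)
    (hker : ∀ u : F, u ≠ 0 → (χ u = 1 ↔ ∃ x : F, x ≠ 0 ∧ x ^ v = u))
    (hT0 : ∀ z ∈ T, z ≠ 0) (y : F) :
    cosetExtension T v g y = (v : ℂ)⁻¹ * ∑ j ∈ range v, cosetCoeff χ T g j * (χ ^ j) y := by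
  rcases eq_or_ne y 0 with rfl | hy
  · simp [cosetExtension, MulChar.map_zero]
  have hχ := MulChar.pow_eq_one_of_apply_eq_one_iff hker
  have hterm : ∀ z ∈ T, (g z : ℂ) * ∑ j ∈ range v, (χ ^ j) (y / z) =
      v * ((if ∃ x : F, x ≠ 0 ∧ x ^ v = y / z then (1 : ℂ) else 0) * (g z : ℂ)) := by
    intro z hz
    have hyz := div_ne_zero hy (hT0 z hz)
    rw [MulChar.sum_range_pow_apply hχ hyz, ← if_congr (hker _ hyz) rfl rfl]
    split_ifs <;> ring
  rw [cosetExtension, if_neg hy]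
  calc _ = (v : ℂ)⁻¹ * ∑ z ∈ T, (g z : ℂ) * ∑ j ∈ range v, (χ ^ j) (y / z) := by
        rw [sum_congr rfl hterm, ← mul_sum, inv_mul_cancel_left₀ (Nat.cast_ne_zero.mpr hv0)]
    _ = _ := by
        simp only [cosetCoeff, sum_mul, mul_sum, div_eq_mul_inv, map_mul]
        rw [sum_comm]
        exact sum_congr rfl fun j _ => sum_congr rfl fun z _ => by ring

lemma norm_cosetExtension_le_one
    (hT : ∀ y : F, y ≠ 0 → ∃! z, z ∈ T ∧ ∃ x : F, x ≠ 0 ∧ x ^ v = y / z)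
    (hg : ∀ z ∈ T, |g z| ≤ 1) (y : F) : ‖cosetExtension T v g y‖ ≤ 1 := by
  rcases eq_or_ne y 0 with rfl | hy
  · simp [cosetExtension]
  obtain ⟨b, ⟨hbT, hb⟩, hb_unique⟩ := hT y hy
  rw [cosetExtension, if_neg hy, sum_eq_single_of_mem b hbT, if_pos hb, one_mul,
    Complex.norm_real, Real.norm_eq_abs]
  · exact hg b hbT
  · intro z hz hzb
    rw [if_neg fun hz' => hzb (hb_unique z ⟨hz, hz'⟩), zero_mul]

lemma norm_cosetCoeff_le (hg : ∀ z ∈ T, |g z| ≤ 1) (j : ℕ) : ‖cosetCoeff χ T g j‖ ≤ #T := by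
  calc ‖cosetCoeff χ T g j‖ ≤ ∑ z ∈ T, ‖(g z : ℂ) * (χ ^ j) z⁻¹‖ := norm_sum_le _ _
    _ ≤ ∑ _z ∈ T, (1 : ℝ) := sum_le_sum fun z hz => by
        rw [norm_mul, Complex.norm_real, Real.norm_eq_abs]
        exact mul_le_one₀ (hg z hz) (norm_nonneg _) ((χ ^ j).norm_apply_le_one _)
    _ = #T := by simp

lemma sum_cosetExtension_mul (hv0 : v ≠ 0)
    (hker : ∀ u : F, u ≠ 0 → (χ u = 1 ↔ ∃ x : F, x ≠ 0 ∧ x ^ v = u))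
    (hT0 : ∀ z ∈ T, z ≠ 0) (w : F → ℂ) :
    ∑ y, cosetExtension T v g y * w y =
      (v : ℂ)⁻¹ * ∑ j ∈ range v, cosetCoeff χ T g j * ∑ y, (χ ^ j) y * w y := by
  simp only [cosetExtension_eq_sum hv0 hker hT0, mul_sum, sum_mul]
  rw [sum_comm]
  exact sum_congr rfl fun j _ => sum_congr rfl fun y _ => by ring

lemma sum_cosetExtension_eq_zero (hv0 : v ≠ 0)
    (hker : ∀ u : F, u ≠ 0 → (χ u = 1 ↔ ∃ x : F, x ≠ 0 ∧ x ^ v = u))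
    (hχ : ∀ j, 0 < j → j < v → χ ^ j ≠ 1)
    (hT0 : ∀ z ∈ T, z ≠ 0) (hgbal : ∑ z ∈ T, g z = 0) :
    ∑ y, cosetExtension T v g y = 0 := by
  have := sum_cosetExtension_mul hv0 hker hT0 (g := g) (fun _ => 1)
  simp only [mul_one] at this
  rw [this, sum_eq_zero, mul_zero]
  intro j hj
  rcases j.eq_zero_or_pos with rfl | hj0
  · rw [cosetCoeff_zero hT0 hgbal, zero_mul]
  · rw [MulChar.sum_eq_zero_of_ne_one (hχ j hj0 (mem_range.mp hj)), mul_zero]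

lemma cosetExtension_fourier_eq (hv0 : v ≠ 0)
    (hker : ∀ u : F, u ≠ 0 → (χ u = 1 ↔ ∃ x : F, x ≠ 0 ∧ x ^ v = u))
    (hT0 : ∀ z ∈ T, z ≠ 0) (ψ : AddChar F ℂ) {a : F} (ha : a ≠ 0) {s : ℂ} (hs : s ≠ 0) :
    1 / s * ∑ y, cosetExtension T v g y * ψ (a * y) = cosetExtension T v g a⁻¹ +
      (v : ℂ)⁻¹ * ∑ j ∈ range v,
        cosetCoeff χ T g j * (χ ^ j) a⁻¹ * (gaussSum (χ ^ j) ψ / s - 1) := by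
  rw [sum_cosetExtension_mul hv0 hker hT0, cosetExtension_eq_sum hv0 hker hT0]
  simp only [MulChar.sum_apply_mul_addChar _ ψ ha, ← mul_add, ← sum_add_distrib, mul_sum]
  refine sum_congr rfl fun j _ => ?_
  field_simp
  ring

lemma norm_inv_mul_sum_cosetCoeff_le (hv0 : v ≠ 0)
    (hker : ∀ u : F, u ≠ 0 → (χ u = 1 ↔ ∃ x : F, x ≠ 0 ∧ x ^ v = u))
    (hT0 : ∀ z ∈ T, z ≠ 0)
    (hT : ∀ y : F, y ≠ 0 → ∃! z, z ∈ T ∧ ∃ x : F, x ≠ 0 ∧ x ^ v = y / z)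
    (hg : ∀ z ∈ T, |g z| ≤ 1) (hgbal : ∑ z ∈ T, g z = 0) {ε : ℝ} (hε : 0 ≤ ε)
    {e : ℕ → ℂ} (he : ∀ j, 0 < j → j < v → ‖e j‖ ≤ ε) (u : F) :
    ‖(v : ℂ)⁻¹ * ∑ j ∈ range v, cosetCoeff χ T g j * (χ ^ j) u * e j‖ ≤ ε * v := by
  have hterm : ∀ j ∈ range v, ‖cosetCoeff χ T g j * (χ ^ j) u * e j‖ ≤ v * ε := by
    intro j hj
    rcases j.eq_zero_or_pos with rfl | hj0
    · rw [cosetCoeff_zero hT0 hgbal, zero_mul, zero_mul, norm_zero]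
      positivity
    have hc : ‖cosetCoeff χ T g j‖ ≤ v := (norm_cosetCoeff_le hg j).trans
      (by exact_mod_cast card_le_of_existsUnique_mem hv0 hker hT0 hT)
    calc _ = ‖cosetCoeff χ T g j‖ * ‖(χ ^ j) u‖ * ‖e j‖ := by rw [norm_mul, norm_mul]
      _ ≤ v * 1 * ε := by
        gcongr
        exacts [(χ ^ j).norm_apply_le_one u, he j hj0 (mem_range.mp hj)]
      _ = v * ε := by ring
  calc _ ≤ (v : ℝ)⁻¹ * ∑ j ∈ range v, ‖cosetCoeff χ T g j * (χ ^ j) u * e j‖ := by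
        rw [norm_mul, norm_inv, Complex.norm_natCast]
        gcongr
        exact norm_sum_le _ _
    _ ≤ (v : ℝ)⁻¹ * ∑ _j ∈ range v, v * ε := by gcongr with j hj; exact hterm j hj
    _ = ε * v := by
        rw [sum_const, card_range, nsmul_eq_mul]
        field_simp

end CosetExtension

theorem fourier_bound_of_gauss_sums_general (F : Type*) [Field F] [Fintype F]
    (ψ : AddChar F ℂ) (v : ℕ) (hv0 : 0 < v)
    (hv : v ∣ Fintype.card F - 1)
    (T : Finset F) (hT0 : ∀ z ∈ T, z ≠ 0)
    (hT : ∀ y : F, y ≠ 0 → ∃! z, z ∈ T ∧ ∃ x : F, x ≠ 0 ∧ x ^ v = y / z)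
    (g : F → ℝ)
    (hgval : ∀ z ∈ T, g z = 0 ∨ g z = 1 ∨ g z = -1)
    (hgbal : ∑ z ∈ T, g z = 0)
    (ε : ℝ) (hε : 0 < ε)
    (hGauss : ∀ χ : MulChar F ℂ, χ ≠ 1 → orderOf χ ∣ v →
      ‖(gaussSum χ ψ / (Real.sqrt (Fintype.card F) : ℂ) - 1)‖ ≤ ε) :
    ∀ a : F, ‖((1 / (Real.sqrt (Fintype.card F) : ℂ)) *
        ∑ y : F, (if y = 0 then 0 else
          ∑ z ∈ T, (if ∃ x : F, x ≠ 0 ∧ x ^ v = y / z then (1 : ℂ) else 0) * (g z : ℂ)) *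
          ψ (a * y))‖ ≤ 1 + ε * v := by
  intro a
  have hf : ∀ y, (if y = 0 then 0 else
      ∑ z ∈ T, (if ∃ x : F, x ≠ 0 ∧ x ^ v = y / z then (1 : ℂ) else 0) * (g z : ℂ)) =
      cosetExtension T v g y := fun y => rfl
  simp only [hf]
  obtain ⟨χ, hχv, hker⟩ := MulChar.exists_orderOf_eq_and_apply_eq_one_iff hv0 hv
  have hχ : ∀ j, 0 < j → j < v → χ ^ j ≠ 1 := fun j hj0 hjv =>
    pow_ne_one_of_lt_orderOf hj0.ne' (hχv ▸ hjv)
  have hg : ∀ z ∈ T, |g z| ≤ 1 := fun z hz => by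
    rcases hgval z hz with h | h | h <;> simp [h]
  rcases eq_or_ne a 0 with rfl | ha
  · simp only [zero_mul, AddChar.map_zero_eq_one, mul_one,
      sum_cosetExtension_eq_zero hv0.ne' hker hχ hT0 hgbal, mul_zero, norm_zero]
    positivity
  have hs : (√(Fintype.card F) : ℂ) ≠ 0 := by
    rw [Complex.ofReal_ne_zero, Real.sqrt_ne_zero']
    exact_mod_cast Fintype.card_pos
  rw [cosetExtension_fourier_eq hv0.ne' hker hT0 ψ ha hs]
  refine (norm_add_le _ _).trans (add_le_add (norm_cosetExtension_le_one hT hg _) ?_)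
  refine norm_inv_mul_sum_cosetCoeff_le hv0.ne' hker hT0 hT hg hgbal hε.le (fun j hj0 hjv => ?_) _
  exact hGauss _ (hχ j hj0 hjv) (hχv ▸ orderOf_pow_dvd j)

theorem fourier_bound_of_gauss_sums (F : Type*) [Field F] [Fintype F]
    (ψ : AddChar F ℂ) (hψ : ψ ≠ 1) (v : ℕ) (hv0 : 0 < v)
    (hv : v ∣ Fintype.card F - 1)
    (T : Finset F) (hT0 : ∀ z ∈ T, z ≠ 0)
    (hT : ∀ y : F, y ≠ 0 → ∃! z, z ∈ T ∧ ∃ x : F, x ≠ 0 ∧ x ^ v = y / z)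
    (g : F → ℝ)
    (hgval : ∀ z ∈ T, g z = 0 ∨ g z = 1 ∨ g z = -1)
    (hgbal : ∑ z ∈ T, g z = 0)
    (hg0 : ∀ z ∈ T, (g z = 0 ↔ ∃ x : F, x ≠ 0 ∧ x ^ v = z))
    (ε : ℝ) (hε : 0 < ε)
    (hGauss : ∀ χ : MulChar F ℂ, χ ≠ 1 → orderOf χ ∣ v →
      ‖(gaussSum χ ψ / (Real.sqrt (Fintype.card F) : ℂ) - 1)‖ ≤ ε) :
    ∀ a : F, ‖((1 / (Real.sqrt (Fintype.card F) : ℂ)) *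
        ∑ y : F, (if y = 0 then 0 else
          ∑ z ∈ T, (if ∃ x : F, x ≠ 0 ∧ x ^ v = y / z then (1 : ℂ) else 0) * (g z : ℂ)) *
          ψ (a * y))‖ ≤ 1 + ε * v :=
  fourier_bound_of_gauss_sums_general F ψ v hv0 hv T hT0 hT g hgval hgbal ε hε hGauss
end
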